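/- arXiv:1107.1992 — 5 statements merged into one kernel-verified Lean document; each statement's English description precedes it below -/
import Mathlib

section
/- Let g ≥ 1 be an integer and ε = exp(iπ/g) ∈ ℂ a primitive (2g)-th root of unity. Define the Laurent polynomial P(u) = (1/2)(u^{g-1} + u^{1-g}) · ∏_{k=1}^{g-1} (ε^k u − ε^{−k} u^{−1})/(ε^k − ε^{−k}). Then for every integer l, P(ε^l) = 1 if g divides l, and P(ε^l) = 0 otherwise. -/
/-!
At `u = ε^l` the `k`-th numerator is `ε^(k+l) - ε^(-(k+l))`, and since `ε` is a primitive
`2g`-th root of unity, `ε^a = ε^(-a)` exactly when `g ∣ a`. Hence no denominator vanishes, and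
if `g ∤ l` the factor with `k ≡ -l (mod g)` kills `P(ε^l)`. If `g ∣ l`, then `s = ε^l` satisfies
`s⁻¹ = s`, so every factor of the product equals `s` and `P(s) = s^(2(g-1)) = 1`.
-/

open Finset

/-- `ε = exp(iπ/g)`, a primitive `(2g)`-th root of unity. -/
noncomputable def eps (g : ℕ) : ℂ := Complex.exp (Real.pi * Complex.I / g)

/-- The symmetrized Lagrange-type Laurent polynomial
`P(u) = (1/2)(u^{g-1} + u^{1-g}) · ∏_{k=1}^{g-1} (ε^k u − ε^{−k} u^{−1})/(ε^k − ε^{−k})`. -/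
noncomputable def interpP (g : ℕ) (u : ℂ) : ℂ :=
  (1 / 2) * (u ^ ((g : ℤ) - 1) + u ^ (1 - (g : ℤ))) *
    ∏ k ∈ Finset.Icc 1 (g - 1),
      (eps g ^ (k : ℤ) * u - eps g ^ (-(k : ℤ)) * u⁻¹) /
        (eps g ^ (k : ℤ) - eps g ^ (-(k : ℤ)))

theorem IsPrimitiveRoot.zpow_eq_zpow_neg_iff {K : Type*} [Field K] {ζ : K} {g : ℕ}
    (hζ : IsPrimitiveRoot ζ (2 * g)) (hg : g ≠ 0) (a : ℤ) :
    ζ ^ a = ζ ^ (-a) ↔ (g : ℤ) ∣ a := by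
  have hζ0 : ζ ≠ 0 := hζ.ne_zero (by omega)
  rw [zpow_neg, ← mul_eq_one_iff_eq_inv₀ (zpow_ne_zero _ hζ0), ← zpow_add₀ hζ0, ← two_mul,
    hζ.zpow_eq_one_iff_dvd, Nat.cast_mul, Nat.cast_two]
  exact mul_dvd_mul_iff_left two_ne_zero

theorem zpow_mul_zpow_sub_zpow_neg_mul_inv {K : Type*} [Field K] {ζ : K} (hζ : ζ ≠ 0) (a b : ℤ) :
    ζ ^ a * ζ ^ b - ζ ^ (-a) * (ζ ^ b)⁻¹ = ζ ^ (a + b) - ζ ^ (-(a + b)) := by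
  rw [← zpow_neg, ← zpow_add₀ hζ, ← zpow_add₀ hζ, neg_add]

theorem exists_mem_Icc_dvd_add_of_not_dvd {g : ℕ} (hg : 0 < g) {l : ℤ} (hl : ¬ (g : ℤ) ∣ l) :
    ∃ k ∈ Icc 1 (g - 1), (g : ℤ) ∣ k + l := by
  have hg' : (0 : ℤ) < g := by exact_mod_cast hg
  have hr : l % g ≠ 0 := fun h => hl (Int.dvd_of_emod_eq_zero h)
  have := Int.emod_nonneg l hg'.ne'
  have := Int.emod_lt_of_pos l hg'
  refine ⟨(g - l % g).toNat, by simp only [mem_Icc]; omega, 1 + l / g, ?_⟩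
  rw [Int.toNat_of_nonneg (by omega)]
  linear_combination -Int.mul_ediv_add_emod l g

theorem isPrimitiveRoot_eps {g : ℕ} (hg : g ≠ 0) : IsPrimitiveRoot (eps g) (2 * g) := by
  convert Complex.isPrimitiveRoot_exp (2 * g) (by omega) using 2
  push_cast
  field_simp
  rfl

theorem eps_zpow_sub_zpow_neg_ne_zero {g k : ℕ} (hk : k ∈ Icc 1 (g - 1)) :
    eps g ^ (k : ℤ) - eps g ^ (-(k : ℤ)) ≠ 0 := by
  simp only [mem_Icc] at hk
  rw [sub_ne_zero, Ne, (isPrimitiveRoot_eps (by omega)).zpow_eq_zpow_neg_iff (by omega),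
    Int.natCast_dvd_natCast]
  exact Nat.not_dvd_of_pos_of_lt (by omega) (by omega)

theorem interpP_eq_one_of_mul_self_eq_one {g : ℕ} (hg : 1 ≤ g) {s : ℂ} (hs : s * s = 1) :
    interpP g s = 1 := by
  have hs_inv : s⁻¹ = s := inv_eq_of_mul_eq_one_right hs
  have hfactor : ∀ k ∈ Icc 1 (g - 1),
      (eps g ^ (k : ℤ) * s - eps g ^ (-(k : ℤ)) * s⁻¹) /
        (eps g ^ (k : ℤ) - eps g ^ (-(k : ℤ))) = s := fun k hk => by
    rw [hs_inv, ← sub_mul, mul_div_right_comm, div_self (eps_zpow_sub_zpow_neg_ne_zero hk),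
      one_mul]
  rw [interpP, prod_congr rfl hfactor, prod_const, Nat.card_Icc,
    show 1 - (g : ℤ) = -((g : ℤ) - 1) by ring, zpow_neg, ← inv_zpow, hs_inv, ← zpow_natCast,
    show ((g - 1 + 1 - 1 : ℕ) : ℤ) = (g : ℤ) - 1 by omega]
  have hpow : s ^ ((g : ℤ) - 1) * s ^ ((g : ℤ) - 1) = 1 := by rw [← mul_zpow, hs, one_zpow]
  linear_combination hpow

/-- For every integer `l`, `P(ε^l) = 1` if `g ∣ l` and `P(ε^l) = 0` otherwise. -/
theorem interpP_eval_eps_pow (g : ℕ) (hg : 1 ≤ g) (l : ℤ) :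
    ((g : ℤ) ∣ l → interpP g (eps g ^ l) = 1) ∧
      (¬ (g : ℤ) ∣ l → interpP g (eps g ^ l) = 0) := by
  have hε := isPrimitiveRoot_eps (g := g) (by omega)
  have hε0 : eps g ≠ 0 := hε.ne_zero (by omega)
  constructor
  · intro hl
    refine interpP_eq_one_of_mul_self_eq_one hg ?_
    rw [← zpow_add₀ hε0, ← two_mul, hε.zpow_eq_one_iff_dvd, Nat.cast_mul, Nat.cast_two]
    exact mul_dvd_mul_left 2 hl
  · intro hl
    obtain ⟨k, hk, hkl⟩ := exists_mem_Icc_dvd_add_of_not_dvd (by omega) hl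
    refine mul_eq_zero_of_right _ (prod_eq_zero hk ?_)
    rw [zpow_mul_zpow_sub_zpow_neg_mul_inv hε0, (hε.zpow_eq_zpow_neg_iff (by omega) _).2 hkl,
      sub_self, zero_div]
end

section
/- Let g ≥ 1, ε = exp(iπ/g), and let P_g be the unique polynomial of degree ≤ g−1 satisfying P_g(1) = 1 and P_g(ε^{2j}) = 0 for j = 1, …, g−1 (Lagrange interpolation at the points 1, ε², …, ε^{2g−2}). Then the Laurent polynomial P defined by P(u) = (1/2)(u^{g-1} + u^{1-g}) · ∏_{k=1}^{g-1} (ε^k u − ε^{−k} u^{−1})/(ε^k − ε^{−k}) satisfies P(u) = (1/2)(P_g(u²) + P_g(u^{−2})). -/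
/-!
With `ζ = ε⁻²`, a primitive `g`-th root of unity, the `k`-th factor of the product is
`u⁻¹ (u² − ζ^k) / (1 − ζ^k)`, and `∏_{k=1}^{g-1} (x − ζ^k) = 1 + x + ⋯ + x^{g-1} =: G(x)`,
so `P(u) = (u^{g-1} + u^{1-g}) u^{1-g} G(u²) / (2g)`. Uniqueness of interpolation at the `g`-th
roots of unity gives `g P_g = G`, and the palindromic symmetry `x^{g-1} G(x⁻¹) = G(x)` turns
`u^{2-2g} G(u²)` into `G(u⁻²)`.
-/

open Finset

open Polynomial

namespace IsPrimitiveRoot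

variable {R : Type*} [CommRing R] [IsDomain R] {ζ : R} {n : ℕ}

theorem prod_X_sub_C_pow_eq_geom_sum (hζ : IsPrimitiveRoot ζ n) (hn : 0 < n) :
    ∏ k ∈ Icc 1 (n - 1), (X - C (ζ ^ k)) = ∑ i ∈ range n, (X : R[X]) ^ i := by
  have hrange : range n = insert 0 (Icc 1 (n - 1)) := by
    ext i; simp only [mem_range, mem_insert, mem_Icc]; omega
  have h := X_pow_sub_C_eq_prod hζ hn (one_pow n)
  simp only [mul_one, hrange, prod_insert (by simp : 0 ∉ Icc 1 (n - 1)), pow_zero] at h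
  refine mul_left_cancel₀ (X_sub_C_ne_zero (1 : R)) ?_
  rw [← h, map_one, mul_geom_sum]

theorem prod_sub_pow_eq_geom_sum (hζ : IsPrimitiveRoot ζ n) (hn : 0 < n) (x : R) :
    ∏ k ∈ Icc 1 (n - 1), (x - ζ ^ k) = ∑ i ∈ range n, x ^ i := by
  simpa [eval_prod, eval_finsetSum] using congrArg (eval x) (hζ.prod_X_sub_C_pow_eq_geom_sum hn)

theorem natCast_mul_eval_eq_geom_sum (hζ : IsPrimitiveRoot ζ n) {p : R[X]}
    (hdeg : p.natDegree < n) (h1 : p.eval 1 = 1)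
    (h0 : ∀ j ∈ Icc 1 (n - 1), p.eval (ζ ^ j) = 0) (x : R) :
    n * p.eval x = ∑ i ∈ range n, x ^ i := by
  suffices C (n : R) * p = ∑ i ∈ range n, X ^ i by
    simpa [eval_finsetSum] using congrArg (eval x) this
  refine eq_of_natDegree_lt_card_of_eval_eq _ _ (f := fun i : Fin n ↦ ζ ^ (i : ℕ))
    (fun i j hij ↦ Fin.ext (hζ.pow_inj i.2 j.2 hij)) (fun i ↦ ?_) ?_
  · rcases Nat.eq_zero_or_pos i with hi | hi
    · simp [hi, h1]
    · have hj : (i : ℕ) ∈ Icc 1 (n - 1) := mem_Icc.2 ⟨hi, by omega⟩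
      have hne : ζ ^ (i : ℕ) - 1 ≠ 0 := sub_ne_zero.2 (hζ.pow_ne_one_of_pos_of_lt hi.ne' i.2)
      have hsum : ∑ k ∈ range n, (ζ ^ (i : ℕ)) ^ k = 0 := by
        refine (mul_eq_zero.1 ?_).resolve_left hne
        rw [mul_geom_sum, ← pow_mul, mul_comm, pow_mul, hζ.pow_eq_one, one_pow, sub_self]
      simp [eval_finsetSum, h0 _ hj, hsum]
  · rw [Fintype.card_fin]
    refine max_lt ((natDegree_C_mul_le _ _).trans_lt hdeg) ?_
    exact (natDegree_sum_le_of_forall_le _ _ fun i hi ↦ (natDegree_X_pow_le i).trans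
      (Nat.le_pred_of_lt (mem_range.1 hi))).trans_lt (Nat.pred_lt_of_lt hdeg)

end IsPrimitiveRoot

theorem inv_pow_mul_geom_sum {K : Type*} [Field K] {w : K} (hw : w ≠ 0) (n : ℕ) :
    w⁻¹ ^ (n - 1) * ∑ i ∈ range n, w ^ i = ∑ i ∈ range n, w⁻¹ ^ i := by
  rw [mul_sum, ← sum_range_reflect (fun i ↦ w⁻¹ ^ i)]
  refine sum_congr rfl fun i hi ↦ ?_
  have hin : i ≤ n - 1 := Nat.le_pred_of_lt (mem_range.1 hi)
  rw [pow_sub₀ _ (inv_ne_zero hw) hin, ← inv_pow, inv_inv]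

theorem mul_sub_inv_mul_inv_div_sub_inv {K : Type*} [Field K] {x u : K} (hx : x ≠ 0)
    (hu : u ≠ 0) :
    (x * u - x⁻¹ * u⁻¹) / (x - x⁻¹) = u⁻¹ * ((u ^ 2 - (x ^ 2)⁻¹) / (1 - (x ^ 2)⁻¹)) := by
  have hnum : x * u - x⁻¹ * u⁻¹ = x * (u⁻¹ * (u ^ 2 - (x ^ 2)⁻¹)) := by field_simp
  have hden : x - x⁻¹ = x * (1 - (x ^ 2)⁻¹) := by field_simp
  rw [hnum, hden, mul_div_mul_left _ _ hx, mul_div_assoc]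

theorem eps_ne_zero {g : ℕ} : eps g ≠ 0 := Complex.exp_ne_zero _

theorem isPrimitiveRoot_eps_sq {g : ℕ} (hg : 0 < g) : IsPrimitiveRoot (eps g ^ 2) g := by
  rw [eps, ← Complex.exp_nat_mul]
  convert Complex.isPrimitiveRoot_exp g hg.ne' using 2
  push_cast
  ring

theorem interpP_eq_geom_sum {g : ℕ} (hg : 0 < g) {u : ℂ} (hu : u ≠ 0) :
    interpP g u = (1 / 2) * (u ^ (g - 1) + u⁻¹ ^ (g - 1)) *
      (u⁻¹ ^ (g - 1) * ((∑ i ∈ range g, (u ^ 2) ^ i) / g)) := by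
  set ζ := (eps g ^ 2)⁻¹
  have hζ : IsPrimitiveRoot ζ g := (isPrimitiveRoot_eps_sq hg).inv
  have hfactor (k : ℕ) : (eps g ^ (k : ℤ) * u - eps g ^ (-(k : ℤ)) * u⁻¹) /
      (eps g ^ (k : ℤ) - eps g ^ (-(k : ℤ))) = u⁻¹ * ((u ^ 2 - ζ ^ k) / (1 - ζ ^ k)) := by
    have hζk : ((eps g ^ k) ^ 2)⁻¹ = ζ ^ k := by rw [← pow_mul, mul_comm, pow_mul, inv_pow]
    rw [zpow_neg, zpow_natCast, mul_sub_inv_mul_inv_div_sub_inv (pow_ne_zero _ eps_ne_zero) hu,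
      hζk]
  rw [interpP, prod_congr rfl fun k _ ↦ hfactor k, prod_mul_distrib, prod_const, Nat.card_Icc,
    prod_div_distrib, hζ.prod_sub_pow_eq_geom_sum hg, hζ.prod_sub_pow_eq_geom_sum hg,
    ← Nat.cast_pred hg, zpow_natCast, show (1 : ℤ) - g = -((g - 1 : ℕ) : ℤ) by omega, zpow_neg, zpow_natCast, inv_pow]
  simp

/-- If `P_g` is the Lagrange interpolation polynomial of degree `≤ g−1` with
`P_g(1) = 1` and `P_g(ε^{2j}) = 0` for `j = 1, …, g−1`, then
`P(u) = (1/2)(P_g(u²) + P_g(u^{−2}))`. -/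
theorem interpP_eq_symmetrized_lagrange (g : ℕ) (hg : 1 ≤ g) (Pg : Polynomial ℂ)
    (hdeg : Pg.natDegree ≤ g - 1) (h1 : Pg.eval 1 = 1)
    (h0 : ∀ j ∈ Finset.Icc 1 (g - 1), Pg.eval (eps g ^ (2 * j)) = 0)
    (u : ℂ) (hu : u ≠ 0) :
    interpP g u = (1 / 2) * (Pg.eval (u ^ 2) + Pg.eval (u⁻¹ ^ 2)) := by
  have hg0 : (g : ℂ) ≠ 0 := Nat.cast_ne_zero.2 (by omega)
  have hPg (x : ℂ) : Pg.eval x = (∑ i ∈ range g, x ^ i) / g := by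
    rw [eq_div_iff hg0, mul_comm]
    exact (isPrimitiveRoot_eps_sq hg).natCast_mul_eval_eq_geom_sum (by omega) h1
      (fun j hj ↦ by rw [← pow_mul]; exact h0 j hj) x
  rw [interpP_eq_geom_sum hg hu, hPg, hPg, inv_pow u 2, ← inv_pow_mul_geom_sum (pow_ne_zero 2 hu)]
  have hcancel : u ^ (g - 1) * u⁻¹ ^ (g - 1) = 1 := by rw [← mul_pow, mul_inv_cancel₀ hu, one_pow]
  linear_combination (∑ i ∈ range g, (u ^ 2) ^ i) / (2 * g) * hcancel
end

section
/- Let A be a ℂ-algebra with second Hochschild cohomology H²(A, A) = 0. Then every one-parameter formal deformation of A (an associative k[[h]]-algebra structure on A[[h]] reducing to A modulo h, with unit 1 ∈ A) is equivalent to the constant deformation, via an isomorphism of ℂ[[h]]-algebras inducing the identity modulo h. -/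
/-!
Build `φ = Σ uₙ hⁿ` degree by degree, starting from `u₀ = id`. Suppose `u₀, …, uₙ₋₁` make `φ`
multiplicative up to order `n`, and let `Dₙ(a, b)` be the `hⁿ`-coefficient of
`φ(a ⋆ b) - φ(a) φ(b)`. Expanding both sides of `φ((a ⋆ b) ⋆ c) = φ(a ⋆ (b ⋆ c))` to order `n`,
all lower defects vanish and what is left is
`Dₙ(ab, c) + Dₙ(a, b) c + [φ(a) φ(b) φ(c)]ₙ = Dₙ(a, bc) + a Dₙ(b, c) + [φ(a) φ(b) φ(c)]ₙ`,
so `Dₙ` is a Hochschild 2-cocycle. As `H²(A, A) = 0` it is the coboundary of some `g`, and taking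
`uₙ := g` removes the defect in degree `n` without touching the lower ones.
-/

open Finset

namespace Finset.Nat

variable {M : Type*} [AddCommMonoid M]

theorem sum_antidiagonal_antidiagonal_assoc (n : ℕ) (f : ℕ → ℕ → ℕ → M) :
    ∑ p ∈ antidiagonal n, ∑ q ∈ antidiagonal p.1, f q.1 q.2 p.2 =
      ∑ p ∈ antidiagonal n, ∑ q ∈ antidiagonal p.2, f p.1 q.1 q.2 := by
  simp only [sum_sigma']
  apply sum_nbij' (fun ⟨⟨_, k⟩, ⟨i, j⟩⟩ ↦ ⟨(i, j + k), (j, k)⟩)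
    (fun ⟨⟨i, _⟩, ⟨j, k⟩⟩ ↦ ⟨(i + j, k), (i, j)⟩) <;> aesop (add simp [add_assoc])

theorem sum_antidiagonal_antidiagonal_right_comm (n : ℕ) (f : ℕ → ℕ → ℕ → M) :
    ∑ p ∈ antidiagonal n, ∑ q ∈ antidiagonal p.1, f q.1 q.2 p.2 =
      ∑ p ∈ antidiagonal n, ∑ q ∈ antidiagonal p.1, f q.1 p.2 q.2 := by
  simp only [sum_sigma']
  apply sum_nbij' (fun ⟨⟨_, k⟩, ⟨i, j⟩⟩ ↦ ⟨(i + k, j), (i, k)⟩)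
    (fun ⟨⟨_, j⟩, ⟨i, k⟩⟩ ↦ ⟨(i + j, k), (i, j)⟩) <;> aesop (add simp [add_right_comm])

theorem sum_antidiagonal_eq_single_left {n : ℕ} {f : ℕ × ℕ → M}
    (h : ∀ p ∈ antidiagonal n, p.1 < n → f p = 0) :
    ∑ p ∈ antidiagonal n, f p = f (n, 0) := by
  refine sum_eq_single_of_mem _ (by simp) fun p hp hne => h p hp ?_
  rw [HasAntidiagonal.mem_antidiagonal] at hp
  exact lt_of_le_of_ne (by omega) fun h1 => hne (Prod.ext h1 (by omega))

theorem sum_antidiagonal_eq_single_right {n : ℕ} {f : ℕ × ℕ → M}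
    (h : ∀ p ∈ antidiagonal n, p.2 < n → f p = 0) :
    ∑ p ∈ antidiagonal n, f p = f (0, n) := by
  rw [← sum_antidiagonal_swap]
  exact sum_antidiagonal_eq_single_left fun p hp => h p.swap (by simpa [add_comm] using hp)

end Finset.Nat

namespace HochschildDeformation

variable {R A : Type*} [CommSemiring R] [Ring A] [Algebra R A]

def IsTwoCocycle (f : A →ₗ[R] A →ₗ[R] A) : Prop :=
  ∀ a b c : A, a * f b c - f (a * b) c + f a (b * c) - f a b * c = 0

section Defect

variable (μ : ℕ → A →ₗ[R] A →ₗ[R] A) (u : ℕ → A →ₗ[R] A)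

/- With `x ⋆ y = Σ μₙ(x, y) hⁿ` and `φ = Σ uₙ hⁿ`, `compCoeff μ u n x y` and `mulCoeff u n x y` are
the `hⁿ`-coefficients of `φ(x ⋆ y)` and `φ(x) φ(y)`. -/
def compCoeff (n : ℕ) (x y : A) : A :=
  ∑ p ∈ antidiagonal n, u p.1 (μ p.2 x y)

def mulCoeff (n : ℕ) (x y : A) : A :=
  ∑ p ∈ antidiagonal n, u p.1 x * u p.2 y

def defect (n : ℕ) : A →ₗ[R] A →ₗ[R] A :=
  ∑ p ∈ antidiagonal n,
    ((μ p.2).compr₂ (u p.1) - (LinearMap.mul R A).compl₁₂ (u p.1) (u p.2))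

variable {μ u}

theorem defect_apply (n : ℕ) (x y : A) :
    defect μ u n x y = compCoeff μ u n x y - mulCoeff u n x y := by
  simp [defect, compCoeff, mulCoeff, LinearMap.sum_apply]

theorem compCoeff_eq_mulCoeff_add_defect (n : ℕ) (x y : A) :
    compCoeff μ u n x y = mulCoeff u n x y + defect μ u n x y := by
  rw [defect_apply, add_sub_cancel]

variable {n : ℕ}

theorem defect_congr {v : ℕ → A →ₗ[R] A} (h : ∀ m ≤ n, u m = v m) :
    defect μ u n = defect μ v n := by
  refine sum_congr rfl fun p hp => ?_
  rw [HasAntidiagonal.mem_antidiagonal] at hp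
  rw [h p.1 (by omega), h p.2 (by omega)]

theorem defect_zero (hμ0 : ∀ a b : A, μ 0 a b = a * b) (hu0 : u 0 = LinearMap.id) :
    defect μ u 0 = 0 := by
  ext a b
  simp [defect_apply, compCoeff, mulCoeff, hμ0, hu0]

theorem sum_compCoeff_star_left (hμ0 : ∀ a b : A, μ 0 a b = a * b) (hu0 : u 0 = LinearMap.id)
    (hlow : ∀ m < n, defect μ u m = 0) (a b c : A) :
    ∑ p ∈ antidiagonal n, compCoeff μ u p.1 (μ p.2 a b) c =
      defect μ u n (a * b) c + defect μ u n a b * c +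
        ∑ p ∈ antidiagonal n, mulCoeff u p.1 a b * u p.2 c := by
  have regroup : ∑ p ∈ antidiagonal n, mulCoeff u p.1 (μ p.2 a b) c =
      ∑ p ∈ antidiagonal n, compCoeff μ u p.1 a b * u p.2 c := by
    simp only [mulCoeff, compCoeff, sum_mul]
    exact Nat.sum_antidiagonal_antidiagonal_right_comm n fun i j k => u i (μ k a b) * u j c
  simp only [compCoeff_eq_mulCoeff_add_defect, sum_add_distrib, add_mul] at regroup ⊢
  rw [regroup, Nat.sum_antidiagonal_eq_single_left (f := fun p => defect μ u p.1 (μ p.2 a b) c),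
    Nat.sum_antidiagonal_eq_single_left (f := fun p => defect μ u p.1 a b * u p.2 c), hμ0, hu0]
  · simp only [LinearMap.id_apply]; abel
  all_goals intro p _ hp; simp [hlow p.1 hp]

theorem sum_compCoeff_star_right (hμ0 : ∀ a b : A, μ 0 a b = a * b) (hu0 : u 0 = LinearMap.id)
    (hlow : ∀ m < n, defect μ u m = 0) (a b c : A) :
    ∑ p ∈ antidiagonal n, compCoeff μ u p.1 a (μ p.2 b c) =
      defect μ u n a (b * c) + a * defect μ u n b c +
        ∑ p ∈ antidiagonal n, u p.1 a * mulCoeff u p.2 b c := by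
  have regroup : ∑ p ∈ antidiagonal n, mulCoeff u p.1 a (μ p.2 b c) =
      ∑ p ∈ antidiagonal n, u p.1 a * compCoeff μ u p.2 b c := by
    simp only [mulCoeff, compCoeff, mul_sum]
    exact Nat.sum_antidiagonal_antidiagonal_assoc n fun i j k => u i a * u j (μ k b c)
  simp only [compCoeff_eq_mulCoeff_add_defect, sum_add_distrib, mul_add] at regroup ⊢
  rw [regroup, Nat.sum_antidiagonal_eq_single_left (f := fun p => defect μ u p.1 a (μ p.2 b c)),
    Nat.sum_antidiagonal_eq_single_right (f := fun p => u p.1 a * defect μ u p.2 b c), hμ0, hu0]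
  · simp only [LinearMap.id_apply]; abel
  all_goals intro p _ hp; simp [hlow _ hp]

theorem sum_mulCoeff_mul_eq_sum_mul_mulCoeff (a b c : A) :
    ∑ p ∈ antidiagonal n, mulCoeff u p.1 a b * u p.2 c =
      ∑ p ∈ antidiagonal n, u p.1 a * mulCoeff u p.2 b c := by
  simp only [mulCoeff, sum_mul, mul_sum, ← mul_assoc]
  exact Nat.sum_antidiagonal_antidiagonal_assoc n fun i j k => u i a * u j b * u k c

theorem sum_compCoeff_star_assoc
    (hassoc : ∀ m (a b c : A), ∑ p ∈ antidiagonal m, μ p.1 (μ p.2 a b) c =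
      ∑ p ∈ antidiagonal m, μ p.1 a (μ p.2 b c)) (a b c : A) :
    ∑ p ∈ antidiagonal n, compCoeff μ u p.1 (μ p.2 a b) c =
      ∑ p ∈ antidiagonal n, compCoeff μ u p.1 a (μ p.2 b c) := by
  simp only [compCoeff]
  rw [Nat.sum_antidiagonal_antidiagonal_assoc n fun i j k => u i (μ j (μ k a b) c),
    Nat.sum_antidiagonal_antidiagonal_assoc n fun i j k => u i (μ j a (μ k b c))]
  simp only [← map_sum, hassoc]

theorem isTwoCocycle_defect (hμ0 : ∀ a b : A, μ 0 a b = a * b)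
    (hassoc : ∀ m (a b c : A), ∑ p ∈ antidiagonal m, μ p.1 (μ p.2 a b) c =
      ∑ p ∈ antidiagonal m, μ p.1 a (μ p.2 b c))
    (hu0 : u 0 = LinearMap.id) (hlow : ∀ m < n, defect μ u m = 0) :
    IsTwoCocycle (defect μ u n) := by
  intro a b c
  have key := (sum_compCoeff_star_left hμ0 hu0 hlow a b c).symm.trans <|
    (sum_compCoeff_star_assoc hassoc a b c).trans (sum_compCoeff_star_right hμ0 hu0 hlow a b c)
  rw [sum_mulCoeff_mul_eq_sum_mul_mulCoeff, add_left_inj] at key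
  rw [← sub_eq_zero.mpr key.symm]
  abel

theorem defect_update (hμ0 : ∀ a b : A, μ 0 a b = a * b) (hu0 : u 0 = LinearMap.id)
    (hn : n ≠ 0) (hun : u n = 0) (w : A →ₗ[R] A) (a b : A) :
    defect μ (Function.update u n w) n a b =
      defect μ u n a b - (a * w b - w (a * b) + w a * b) := by
  set s : ℕ → A →ₗ[R] A := Pi.single n w with hs
  have hs_n : s n = w := by simp [hs]
  have hs_ne : ∀ i ≠ n, s i = 0 := fun i hi => by simp [hs, hi]
  have hupdate : Function.update u n w = u + s := by
    ext1 i
    by_cases hi : i = n <;> simp [hs, hi, hun]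
  have hcomp : compCoeff μ (Function.update u n w) n a b = compCoeff μ u n a b + w (a * b) := by
    rw [hupdate, compCoeff, compCoeff]
    simp only [Pi.add_apply, LinearMap.add_apply, sum_add_distrib]
    rw [Nat.sum_antidiagonal_eq_single_left (f := fun p => s p.1 (μ p.2 a b))
      fun p _ h => by simp [hs_ne _ h.ne]]
    simp [hs_n, hμ0]
  have hmul : mulCoeff (Function.update u n w) n a b = mulCoeff u n a b + w a * b + a * w b := by
    rw [hupdate, mulCoeff, mulCoeff]
    simp only [Pi.add_apply, LinearMap.add_apply, add_mul, mul_add, sum_add_distrib]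
    rw [Nat.sum_antidiagonal_eq_single_left (f := fun p => s p.1 a * u p.2 b),
      Nat.sum_antidiagonal_eq_single_right (f := fun p => u p.1 a * s p.2 b),
      Nat.sum_antidiagonal_eq_single_left (f := fun p => s p.1 a * s p.2 b)]
    · simp [hs_n, hs_ne 0 hn.symm, hu0]
    all_goals intro p _ h; simp [hs_ne _ h.ne]
  rw [defect_apply, defect_apply, hcomp, hmul]
  abel

end Defect

section Gauge

variable (g : (A →ₗ[R] A →ₗ[R] A) → A →ₗ[R] A) (μ : ℕ → A →ₗ[R] A →ₗ[R] A)

/-- `gaugeApprox g μ n = (u₀, …, uₙ, 0, 0, …)`, each new `uₙ` being `g` applied to the defect in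
degree `n`; `g` is meant to pick a primitive of every 2-cocycle. -/
def gaugeApprox : ℕ → ℕ → A →ₗ[R] A
  | 0 => Pi.single 0 LinearMap.id
  | n + 1 => Function.update (gaugeApprox n) (n + 1) (g (defect μ (gaugeApprox n) (n + 1)))

def gauge (n : ℕ) : A →ₗ[R] A :=
  gaugeApprox g μ n n

variable {g μ}

theorem gaugeApprox_eq_zero_of_lt {n m : ℕ} (h : n < m) : gaugeApprox g μ n m = 0 := by
  induction n with
  | zero => simp [gaugeApprox, h.ne']
  | succ n ih => simp [gaugeApprox, h.ne', ih (by omega)]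

theorem gaugeApprox_eq_gauge_of_le {n m : ℕ} (h : m ≤ n) : gaugeApprox g μ n m = gauge g μ m := by
  induction n with
  | zero => obtain rfl := Nat.le_zero.mp h; rfl
  | succ n ih =>
    rcases h.lt_or_eq with h | rfl
    · simp [gaugeApprox, h.ne, ih (by omega)]
    · rfl

theorem gauge_zero : gauge g μ 0 = LinearMap.id := by
  simp [gauge, gaugeApprox]

theorem defect_gaugeApprox {n m : ℕ} (h : m ≤ n) :
    defect μ (gaugeApprox g μ n) m = defect μ (gauge g μ) m :=
  defect_congr fun _ hk => gaugeApprox_eq_gauge_of_le (hk.trans h)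

theorem defect_gauge_eq_zero (hμ0 : ∀ a b : A, μ 0 a b = a * b)
    (hassoc : ∀ m (a b c : A), ∑ p ∈ antidiagonal m, μ p.1 (μ p.2 a b) c =
      ∑ p ∈ antidiagonal m, μ p.1 a (μ p.2 b c))
    (hg : ∀ f, IsTwoCocycle f → ∀ a b, f a b = a * g f b - g f (a * b) + g f a * b) (n : ℕ) :
    defect μ (gauge g μ) n = 0 := by
  induction n using Nat.strong_induction_on with
  | _ n ih =>
    obtain _ | n := n
    · exact defect_zero hμ0 gauge_zero
    set v := gaugeApprox g μ n
    have hv0 : v 0 = LinearMap.id := (gaugeApprox_eq_gauge_of_le n.zero_le).trans gauge_zero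
    have hcocycle : IsTwoCocycle (defect μ v (n + 1)) :=
      isTwoCocycle_defect hμ0 hassoc hv0 fun m hm =>
        (defect_gaugeApprox (Nat.le_of_lt_succ hm)).trans (ih m hm)
    rw [← defect_gaugeApprox le_rfl]
    ext a b
    rw [gaugeApprox, defect_update hμ0 hv0 n.succ_ne_zero (gaugeApprox_eq_zero_of_lt n.lt_succ_self),
      ← hg _ hcocycle, sub_self, LinearMap.zero_apply, LinearMap.zero_apply]

end Gauge

end HochschildDeformation

open HochschildDeformation

theorem deformation_trivial_of_H2_eq_zero_general (A : Type*) [Ring A] [Algebra ℂ A]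
    (hH2 : ∀ f : A →ₗ[ℂ] A →ₗ[ℂ] A,
      (∀ a b c : A, a * f b c - f (a * b) c + f a (b * c) - f a b * c = 0) →
      ∃ g : A →ₗ[ℂ] A, ∀ a b : A, f a b = a * g b - g (a * b) + g a * b)
    (μ : ℕ → A →ₗ[ℂ] A →ₗ[ℂ] A)
    (hμ0 : ∀ a b : A, μ 0 a b = a * b)
    (hassoc : ∀ n : ℕ, ∀ a b c : A,
      ∑ p ∈ Finset.range (n + 1), (μ p (μ (n - p) a b) c - μ p a (μ (n - p) b c)) = 0) :
    ∃ u : ℕ → A →ₗ[ℂ] A, u 0 = LinearMap.id ∧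
      ∀ n : ℕ, ∀ a b : A,
        ∑ p ∈ Finset.range (n + 1), u p (μ (n - p) a b) =
          ∑ p ∈ Finset.range (n + 1), u p a * u (n - p) b := by
  choose! g hg using hH2
  have hassoc' : ∀ m (a b c : A), ∑ p ∈ antidiagonal m, μ p.1 (μ p.2 a b) c =
      ∑ p ∈ antidiagonal m, μ p.1 a (μ p.2 b c) := fun m a b c => by
    rw [← sub_eq_zero, ← sum_sub_distrib,
      Nat.sum_antidiagonal_eq_sum_range_succ fun i j => μ i (μ j a b) c - μ i a (μ j b c)]
    exact hassoc m a b c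
  refine ⟨gauge g μ, gauge_zero, fun n a b => ?_⟩
  have h := congr($(defect_gauge_eq_zero hμ0 hassoc' hg n) a b)
  rwa [defect_apply, LinearMap.zero_apply, LinearMap.zero_apply, sub_eq_zero, compCoeff, mulCoeff,
    Nat.sum_antidiagonal_eq_sum_range_succ fun i j => gauge g μ i (μ j a b),
    Nat.sum_antidiagonal_eq_sum_range_succ fun i j => gauge g μ i a * gauge g μ j b] at h

/-- If every Hochschild 2-cocycle of a ℂ-algebra `A` (with coefficients in `A`) is a
coboundary (i.e. `H²(A, A) = 0`), then every one-parameter formal deformation of `A` —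
given by its family of coefficient bilinear maps `μₙ` with `μ₀` the product of `A`,
satisfying the associativity equations and having `1 ∈ A` as unit — is trivial:
it is equivalent to the constant deformation via `φ = Σ uₙ hⁿ` with `u₀ = id`. -/
theorem deformation_trivial_of_H2_eq_zero (A : Type*) [Ring A] [Algebra ℂ A]
    (hH2 : ∀ f : A →ₗ[ℂ] A →ₗ[ℂ] A,
      (∀ a b c : A, a * f b c - f (a * b) c + f a (b * c) - f a b * c = 0) →
      ∃ g : A →ₗ[ℂ] A, ∀ a b : A, f a b = a * g b - g (a * b) + g a * b)
    (μ : ℕ → A →ₗ[ℂ] A →ₗ[ℂ] A)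
    (hμ0 : ∀ a b : A, μ 0 a b = a * b)
    (hassoc : ∀ n : ℕ, ∀ a b c : A,
      ∑ p ∈ Finset.range (n + 1), (μ p (μ (n - p) a b) c - μ p a (μ (n - p) b c)) = 0)
    (hunit : ∀ n : ℕ, 0 < n → ∀ a : A, μ n 1 a = 0 ∧ μ n a 1 = 0) :
    ∃ u : ℕ → A →ₗ[ℂ] A, u 0 = LinearMap.id ∧
      ∀ n : ℕ, ∀ a b : A,
        ∑ p ∈ Finset.range (n + 1), u p (μ (n - p) a b) =
          ∑ p ∈ Finset.range (n + 1), u p a * u (n - p) b :=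
  deformation_trivial_of_H2_eq_zero_general A hH2 μ hμ0 hassoc
end

section
/- Let A be a ℂ-algebra, V a representation of A with H¹(A, End_ℂ V) = 0, and (V, π_h) a representation of the constant deformation A[[h]] (i.e., a ℂ[[h]]-algebra morphism π_h : A[[h]] → End_{ℂ[[h]]}(V[[h]])) whose reduction mod h is π₀. Then (V, π_h) is equivalent to the constant deformation of (V, π₀): there exists u_h = id + h u₁ + h²u₂ + ⋯ with u_h ∘ π₀(a) = π_h(a) ∘ u_h for all a ∈ A. -/
open Finset

lemma tri_sum {E : Type*} [AddCommMonoid E] (g : ℕ → ℕ → E) (M : ℕ) :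
    ∑ p ∈ range (M + 1), ∑ q ∈ range (p + 1), g q (p - q)
      = ∑ q ∈ range (M + 1), ∑ r ∈ range (M + 1 - q), g q r := by
  induction M with
  | zero => simp
  | succ M ih =>
      rw [Finset.sum_range_succ, ih]
      have h1 : ∀ q ∈ range (M + 2), ∑ r ∈ range (M + 2 - q), g q r
          = ∑ r ∈ range (M + 1 - q), g q r + (if q ≤ M + 1 then g q (M + 1 - q) else 0) := by
        intro q hq
        have hq' : q ≤ M + 1 := by simpa [Nat.lt_succ_iff] using hq
        rw [if_pos hq']
        have : M + 2 - q = (M + 1 - q) + 1 := by omega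
        rw [this, Finset.sum_range_succ]
      rw [Finset.sum_congr rfl h1, Finset.sum_add_distrib]
      congr 1
      · symm
        rw [Finset.sum_range_succ]
        simp
      · refine Finset.sum_congr rfl fun q hq => ?_
        have hq' : q ≤ M + 1 := by simpa [Nat.lt_succ_iff] using hq
        rw [if_pos hq']

section Aux

variable {A : Type*} [Ring A] [Algebra ℂ A] {V : Type*} [AddCommGroup V] [Module ℂ V]

noncomputable def fMap (π : ℕ → A →ₗ[ℂ] Module.End ℂ V) (prev : ℕ → Module.End ℂ V)
    (n : ℕ) : A →ₗ[ℂ] Module.End ℂ V :=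
  ∑ p ∈ Finset.Ico 1 (n + 1), (LinearMap.mulRight ℂ (prev (n - p))).comp (π p)

lemma fMap_apply (π : ℕ → A →ₗ[ℂ] Module.End ℂ V) (prev : ℕ → Module.End ℂ V)
    (n : ℕ) (a : A) :
    fMap π prev n a = ∑ p ∈ Finset.Ico 1 (n + 1), π p a * prev (n - p) := by
  simp [fMap, LinearMap.sum_apply]

open scoped Classical in
noncomputable def stepE (π : ℕ → A →ₗ[ℂ] Module.End ℂ V)
    (hH1 : ∀ f : A →ₗ[ℂ] Module.End ℂ V,
      (∀ a b : A, f (a * b) = π 0 a * f b + f a * π 0 b) →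
      ∃ m : Module.End ℂ V, ∀ a : A, f a = π 0 a * m - m * π 0 a)
    (prev : ℕ → Module.End ℂ V) (n : ℕ) : Module.End ℂ V :=
  if hc : ∀ a b : A, fMap π prev n (a * b)
      = π 0 a * fMap π prev n b + fMap π prev n a * π 0 b
  then -(hH1 _ hc).choose else 0

noncomputable def seqE (π : ℕ → A →ₗ[ℂ] Module.End ℂ V)
    (hH1 : ∀ f : A →ₗ[ℂ] Module.End ℂ V,
      (∀ a b : A, f (a * b) = π 0 a * f b + f a * π 0 b) →
      ∃ m : Module.End ℂ V, ∀ a : A, f a = π 0 a * m - m * π 0 a) :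
    ℕ → ℕ → Module.End ℂ V
  | 0 => fun _ => 1
  | n + 1 => Function.update (seqE π hH1 n) (n + 1) (stepE π hH1 (seqE π hH1 n) (n + 1))

lemma seqE_stable (π : ℕ → A →ₗ[ℂ] Module.End ℂ V)
    (hH1 : ∀ f : A →ₗ[ℂ] Module.End ℂ V,
      (∀ a b : A, f (a * b) = π 0 a * f b + f a * π 0 b) →
      ∃ m : Module.End ℂ V, ∀ a : A, f a = π 0 a * m - m * π 0 a)
    (n m : ℕ) (h : m ≤ n) : seqE π hH1 n m = seqE π hH1 m m := by
  induction n with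
  | zero =>
      have : m = 0 := Nat.le_zero.mp h
      subst this; rfl
  | succ n ih =>
      rcases eq_or_lt_of_le h with rfl | h'
      · rfl
      · have hm : m ≤ n := Nat.lt_succ_iff.mp h'
        show Function.update (seqE π hH1 n) (n + 1) _ m = _
        rw [Function.update_of_ne (by omega)]
        exact ih hm

end Aux


/-- Let `A` be a ℂ-algebra and `(V, π_h)` a representation of the constant deformation
`A[[h]]`, given by its coefficient maps `πₙ : A → End_ℂ V` satisfying
`πₙ(ab) = Σ_{p+q=n} π_p(a) ∘ π_q(b)` and the unit conditions, with `π₀` an honest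
representation of `A` on `V`. If `H¹(A, End_ℂ V) = 0` (every 1-cocycle for the
bimodule `End_ℂ V` is a coboundary), then `(V, π_h)` is equivalent to the constant
deformation of `(V, π₀)`: there exists `u_h = id + h u₁ + h² u₂ + ⋯` with
`u_h ∘ π₀(a) = π_h(a) ∘ u_h` for all `a ∈ A`. -/
theorem representation_trivial_of_H1_eq_zero (A : Type*) [Ring A] [Algebra ℂ A]
    (V : Type*) [AddCommGroup V] [Module ℂ V]
    (π : ℕ → A →ₗ[ℂ] Module.End ℂ V)
    (hmul : ∀ n : ℕ, ∀ a b : A,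
      π n (a * b) = ∑ p ∈ Finset.range (n + 1), π p a * π (n - p) b)
    (hone0 : π 0 1 = 1) (hone : ∀ n : ℕ, 0 < n → π n 1 = 0)
    (hH1 : ∀ f : A →ₗ[ℂ] Module.End ℂ V,
      (∀ a b : A, f (a * b) = π 0 a * f b + f a * π 0 b) →
      ∃ m : Module.End ℂ V, ∀ a : A, f a = π 0 a * m - m * π 0 a) :
    ∃ u : ℕ → Module.End ℂ V, u 0 = 1 ∧
      ∀ n : ℕ, ∀ a : A,
        u n * π 0 a = ∑ p ∈ Finset.range (n + 1), π p a * u (n - p) := by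
  refine ⟨fun n => seqE π hH1 n n, rfl, ?_⟩
  intro n
  induction n using Nat.strong_induction_on with
  | _ n IH =>
    rcases n with _ | N
    · intro a; simp [seqE]
    · set u' : ℕ → Module.End ℂ V := fun m => seqE π hH1 m m with hu'
      set prev : ℕ → Module.End ℂ V := seqE π hH1 N with hprev
      have hstable : ∀ m ≤ N, prev m = u' m := fun m hm => seqE_stable π hH1 N m hm
      -- cocycle condition
      have hc : ∀ a b : A, fMap π prev (N + 1) (a * b)
          = π 0 a * fMap π prev (N + 1) b + fMap π prev (N + 1) a * π 0 b := by
        intro a b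
        set G : ℕ → ℕ → Module.End ℂ V :=
          fun q s => π q a * π s b * u' (N + 1 - q - s) with hG
        have hL : fMap π prev (N + 1) (a * b) + G 0 0
            = ∑ p ∈ range (N + 1 + 1), ∑ q ∈ range (p + 1), G q (p - q) := by
          rw [fMap_apply,
            Finset.sum_range_eq_add_Ico _ (show 0 < N + 1 + 1 by omega)]
          have h0 : ∑ q ∈ range (0 + 1), G q (0 - q) = G 0 0 := by simp
          rw [h0, add_comm _ (G 0 0)]
          congr 1
          refine Finset.sum_congr rfl fun p hp => ?_
          obtain ⟨hp1, hp2⟩ := Finset.mem_Ico.mp hp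
          rw [hmul p a b, Finset.sum_mul, hstable (N + 1 - p) (by omega)]
          refine Finset.sum_congr rfl fun q hq => ?_
          have hq' : q ≤ p := Nat.lt_succ_iff.mp (Finset.mem_range.mp hq)
          simp only [hG]
          rw [show N + 1 - q - (p - q) = N + 1 - p from by omega]
        have hR : (π 0 a * fMap π prev (N + 1) b + fMap π prev (N + 1) a * π 0 b) + G 0 0
            = ∑ q ∈ range (N + 1 + 1), ∑ r ∈ range (N + 1 + 1 - q), G q r := by
          rw [fMap_apply, fMap_apply, Finset.mul_sum, Finset.sum_mul,
            Finset.sum_range_eq_add_Ico _ (show 0 < N + 1 + 1 by omega)]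
          have h00 : ∑ r ∈ range (N + 1 + 1 - 0), G 0 r
              = G 0 0 + ∑ r ∈ Finset.Ico 1 (N + 1 + 1), G 0 r := by
            rw [show N + 1 + 1 - 0 = N + 1 + 1 from rfl,
              Finset.sum_range_eq_add_Ico _ (show 0 < N + 1 + 1 by omega)]
          rw [h00]
          have e1 : ∑ p ∈ Finset.Ico 1 (N + 1 + 1), π 0 a * (π p b * prev (N + 1 - p))
              = ∑ r ∈ Finset.Ico 1 (N + 1 + 1), G 0 r := by
            refine Finset.sum_congr rfl fun p hp => ?_
            obtain ⟨hp1, hp2⟩ := Finset.mem_Ico.mp hp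
            rw [hstable (N + 1 - p) (by omega)]
            simp only [hG]
            rw [show N + 1 - 0 - p = N + 1 - p from by omega, mul_assoc]
          have e2 : ∑ p ∈ Finset.Ico 1 (N + 1 + 1), π p a * prev (N + 1 - p) * π 0 b
              = ∑ q ∈ Finset.Ico 1 (N + 1 + 1), ∑ r ∈ range (N + 1 + 1 - q), G q r := by
            refine Finset.sum_congr rfl fun p hp => ?_
            obtain ⟨hp1, hp2⟩ := Finset.mem_Ico.mp hp
            rw [mul_assoc, hstable (N + 1 - p) (by omega)]
            have hIH := IH (N + 1 - p) (by omega) b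
            rw [hIH, Finset.mul_sum, show N + 1 - p + 1 = N + 1 + 1 - p from by omega]
            refine Finset.sum_congr rfl fun r hr => ?_
            simp only [hG]
            rw [mul_assoc]
          rw [e1, e2]
          abel
        have := hL.trans ((tri_sum G (N + 1)).trans hR.symm)
        exact add_right_cancel this
      have hval : seqE π hH1 (N + 1) (N + 1) = -(hH1 _ hc).choose := by
        show Function.update (seqE π hH1 N) (N + 1)
          (stepE π hH1 (seqE π hH1 N) (N + 1)) (N + 1) = _
        rw [Function.update_self]
        unfold stepE
        rw [dif_pos hc]
      have hspec := (hH1 _ hc).choose_spec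
      intro a
      have hsplit : ∑ p ∈ range (N + 1 + 1), π p a * u' (N + 1 - p)
          = π 0 a * u' (N + 1)
            + ∑ p ∈ Finset.Ico 1 (N + 1 + 1), π p a * prev (N + 1 - p) := by
        rw [Finset.sum_range_eq_add_Ico _ (show 0 < N + 1 + 1 by omega)]
        congr 1
        refine Finset.sum_congr rfl fun p hp => ?_
        obtain ⟨hp1, hp2⟩ := Finset.mem_Ico.mp hp
        rw [hstable (N + 1 - p) (by omega)]
      rw [hsplit, ← fMap_apply π prev (N + 1) a, hspec a,
        show u' (N + 1) = -(hH1 _ hc).choose from hval]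
      noncomm_ring
end

section
/- Let g ≥ 1, and for n ∈ g·ℕ consider the irreducible sl₂-representation L(n) of highest weight n, with character χ(L(n)) = Σ_{j=0}^{n} e^{n−2j}. Define Π_g on the group ring ℤ[ℤ] by Π_g(e^m) = e^{m/g} if g | m and 0 otherwise. If g is odd, then Π_g(χ(L(n))) = χ(L(n/g)). If g is even and n > 0, then Π_g(χ(L(n))) = χ(L(n/g)) + χ(L(n/g − 1)), and Π_g(χ(L(0))) = χ(L(0)). -/
open Finset

/-! `e^k` occurs in `χ(L(n))`, with multiplicity one, exactly when `|k| ≤ n` and `k ≡ n (mod 2)`,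
and the coefficient of `e^k` in `Π_g f` is the coefficient of `e^{g k}` in `f`. For `n = g m` the
weights surviving `Π_g` are therefore the `k` with `|k| ≤ m` and `g (m - k)` even. For odd `g`
these are the weights of `L(m)`; for even `g` they are all `|k| ≤ m`, the weights of `L(m)`
(parity of `m`) together with those of `L(m - 1)` (the other parity). -/

/-- The character `χ(L(n)) = Σ_{j=0}^{n} e^{n−2j}` of the irreducible `sl₂`-representation
of highest weight `n`, as an element of the group ring `ℤ[ℤ]`. -/
noncomputable def chi (n : ℕ) : AddMonoidAlgebra ℤ ℤ :=
  ∑ j ∈ Finset.range (n + 1), AddMonoidAlgebra.single ((n : ℤ) - 2 * j) (1 : ℤ)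

/-- The additive map `Π_g : ℤ[ℤ] → ℤ[ℤ]` sending `e^m` to `e^{m/g}` if `g ∣ m`
and to `0` otherwise. -/
noncomputable def Pig (g : ℕ) (f : AddMonoidAlgebra ℤ ℤ) : AddMonoidAlgebra ℤ ℤ :=
  f.coeff.sum fun m c => if (g : ℤ) ∣ m then AddMonoidAlgebra.single (m / (g : ℤ)) c else 0

theorem coeff_Pig {g : ℕ} (hg : g ≠ 0) (f : AddMonoidAlgebra ℤ ℤ) (k : ℤ) :
    (Pig g f).coeff k = f.coeff (g * k) := by
  have hg' : (g : ℤ) ≠ 0 := by exact_mod_cast hg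
  have hterm (m c : ℤ) : (if (g : ℤ) ∣ m then AddMonoidAlgebra.single (m / (g : ℤ)) c else 0).coeff k
      = if g * k = m then c else 0 := by
    by_cases hdvd : (g : ℤ) ∣ m
    · obtain ⟨q, rfl⟩ := hdvd
      rw [if_pos ⟨q, rfl⟩, Int.mul_ediv_cancel_left _ hg', AddMonoidAlgebra.coeff_single,
        Finsupp.single_apply]
      simp only [mul_right_inj' hg', eq_comm]
    · rw [if_neg hdvd, if_neg fun h => hdvd ⟨k, h.symm⟩]
      rfl
  rw [Pig, AddMonoidAlgebra.coeff_finsuppSum, Finsupp.sum_apply]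
  simp only [hterm]
  exact Finsupp.sum_ite_self_eq _ _

theorem coeff_chi (n : ℕ) (k : ℤ) :
    (chi n).coeff k = if |k| ≤ n ∧ Even ((n : ℤ) - k) then 1 else 0 := by
  rw [chi, AddMonoidAlgebra.coeff_sum, Finsupp.finsetSum_apply]
  simp only [AddMonoidAlgebra.coeff_single, Finsupp.single_apply]
  split_ifs with hk
  · obtain ⟨hle, r, hr⟩ := hk
    rw [abs_le] at hle
    lift r to ℕ using (by omega)
    rw [sum_eq_single_of_mem r (mem_range.2 (by omega)) fun j _ hj => if_neg (by omega),
      if_pos (by omega)]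
  · refine sum_eq_zero fun j hj => if_neg fun hjk => hk ⟨?_, j, by omega⟩
    rw [mem_range] at hj
    rw [abs_le]
    omega

theorem coeff_Pig_chi_mul {g : ℕ} (hg : 0 < g) (m : ℕ) (k : ℤ) :
    (Pig g (chi (g * m))).coeff k = if |k| ≤ m ∧ Even ((g : ℤ) * (m - k)) then 1 else 0 := by
  have hg' : (0 : ℤ) < g := by exact_mod_cast hg
  rw [coeff_Pig hg.ne', coeff_chi]
  simp only [Nat.cast_mul, abs_mul, abs_of_pos hg', mul_sub, mul_le_mul_iff_right₀ hg']

theorem coeff_chi_add_chi_pred {m : ℕ} (hm : 0 < m) (k : ℤ) :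
    (chi m + chi (m - 1)).coeff k = if |k| ≤ m then 1 else 0 := by
  rw [AddMonoidAlgebra.coeff_add, Finsupp.add_apply, coeff_chi, coeff_chi, Nat.cast_sub hm]
  simp only [Int.even_iff, abs_le, Nat.cast_one]
  split_ifs <;> omega

theorem Pig_single_zero (g : ℕ) (c : ℤ) :
    Pig g (AddMonoidAlgebra.single 0 c) = AddMonoidAlgebra.single 0 c := by
  by_cases hc : c = 0
  · simp [hc, Pig]
  · rw [Pig, AddMonoidAlgebra.coeff_single, Finsupp.sum_single_index] <;> simp

theorem chi_zero : chi 0 = AddMonoidAlgebra.single 0 1 := by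
  simp [chi]

/-- Langlands duality of characters in rank 1: for `n = g·m ∈ g·ℕ`,
if `g` is odd then `Π_g(χ(L(n))) = χ(L(n/g))`; if `g` is even and `n > 0` then
`Π_g(χ(L(n))) = χ(L(n/g)) + χ(L(n/g − 1))`, and `Π_g(χ(L(0))) = χ(L(0))`. -/
theorem langlands_character_duality_rank1 (g m : ℕ) (hg : 1 ≤ g) :
    (Odd g → Pig g (chi (g * m)) = chi m) ∧
    (Even g → 0 < m → Pig g (chi (g * m)) = chi m + chi (m - 1)) ∧
    (Even g → Pig g (chi 0) = chi 0) := by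
  refine ⟨fun hodd => ?_, fun heven hm => ?_, fun _ => ?_⟩
  · refine AddMonoidAlgebra.ext <| Finsupp.ext fun k => ?_
    rw [coeff_Pig_chi_mul hg, coeff_chi]
    simp only [Int.even_mul, Int.even_coe_nat, or_iff_right (Nat.not_even_iff_odd.2 hodd)]
  · refine AddMonoidAlgebra.ext <| Finsupp.ext fun k => ?_
    have hpar : Even ((g : ℤ) * (m - k)) := (Int.even_coe_nat g).2 heven |>.mul_right _
    rw [coeff_Pig_chi_mul hg, coeff_chi_add_chi_pred hm]
    simp only [and_iff_left hpar]
  · rw [chi_zero, Pig_single_zero]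
end
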